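/- arXiv:2008.06010 — 5 statements merged into one kernel-verified Lean document; each statement's English description precedes it below -/
import Mathlib

section
/- The Wronskian of the monomials x, x^3, ..., x^{2m-1} equals (∏_{j=1}^{m-1} (m-j)!) · 2^{m(m-1)/2} · x^{m(m+1)/2}. -/
/-!
The `i`-th derivative of `x ^ (2j+1)` is `(2j+1)ᵢ x ^ (2j+1-i)`, with the falling factorial
`(2j+1)ᵢ` vanishing exactly when the exponent would be negative. In every nonzero term of the
Leibniz expansion the powers of `x` therefore multiply to
`x ^ (∑ (2j+1) - ∑ i) = x ^ (m(m+1)/2)`, and what remains is the falling-factorial matrix.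
Its transpose evaluates the monic polynomials `X(X-1)⋯(X-i+1)` at the nodes `2j+1`, so its
determinant is the Vandermonde determinant of these nodes, which is `2 ^ (m(m-1)/2)` times
that of `0, …, m-1`, the superfactorial `∏ j ∈ [1, m-1], (m-j)!`.
-/

open Finset Matrix Nat

namespace Matrix

variable {R : Type*} [CommRing R]

theorem det_of_mul_pow_sub {n : Type*} [Fintype n] [DecidableEq n] (c : n → n → R) (x : R)
    (e f : n → ℕ) (hc : ∀ i j, e j < f i → c i j = 0) :
    det (of fun i j => c i j * x ^ (e j - f i)) = x ^ (∑ j, e j - ∑ i, f i) * det (of c) := by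
  rw [det_apply', det_apply', mul_sum]
  refine sum_congr rfl fun σ _ => ?_
  simp only [of_apply]
  by_cases hσ : ∀ i, f (σ i) ≤ e i
  · have hexp : ∑ i, (e i - f (σ i)) = ∑ j, e j - ∑ i, f i := by
      rw [sum_tsub_distrib _ fun i _ => hσ i, Equiv.sum_comp σ f]
    rw [prod_mul_distrib, prod_pow_eq_pow_sum, hexp]
    ring
  · obtain ⟨i, hi⟩ := not_forall.mp hσ
    have hzero : c (σ i) i = 0 := hc _ _ (not_le.mp hi)
    rw [prod_eq_zero (mem_univ i) (by rw [hzero, zero_mul]),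
      prod_eq_zero (f := fun i => c (σ i) i) (mem_univ i) hzero]
    ring

theorem det_descFactorial_eq_det_vandermonde [IsDomain R] {k : ℕ} (v : Fin k → ℕ) :
    det (of fun i j : Fin k => ((v j).descFactorial i : R)) =
      det (vandermonde fun i => (v i : R)) := by
  rw [← det_transpose, det_eval_matrixOfPolynomials_eq_det_vandermonde _
    (fun j => descPochhammer R j) (fun j => descPochhammer_natDegree R j)
    (fun j => monic_descPochhammer R j)]
  congr 1
  ext i j
  exact (descPochhammer_eval_eq_descFactorial R _ _).symm

theorem det_vandermonde_const_mul {k : ℕ} (a : R) (v : Fin k → R) :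
    det (vandermonde fun i => a * v i) = a ^ (k * (k - 1) / 2) * det (vandermonde v) := by
  have hscale : vandermonde (fun i => a * v i) =
      of fun i j : Fin k => a ^ (j : ℕ) * vandermonde v i j := by
    ext i j
    simp [mul_pow]
  rw [hscale, det_mul_row, prod_pow_eq_pow_sum, Fin.sum_univ_eq_sum_range (fun j => j),
    sum_range_id]

theorem det_vandermonde_id_eq_superFactorial_pred (k : ℕ) :
    det (vandermonde fun i : Fin k => (i : R)) = sf (k - 1) := by
  cases k with
  | zero => simp
  | succ k => exact det_vandermonde_id_eq_superFactorial k

end Matrix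

theorem Nat.prod_Icc_factorial_sub_eq_superFactorial (m : ℕ) :
    ∏ j ∈ Icc 1 (m - 1), (m - j)! = sf (m - 1) := by
  rw [← prod_Icc_factorial]
  refine prod_nbij' (m - ·) (m - ·) ?_ ?_ ?_ ?_ ?_ <;> intro j <;> simp <;> omega

theorem Finset.sum_range_odd_sub_sum_range_id (m : ℕ) :
    ∑ j ∈ range m, (2 * j + 1) - ∑ i ∈ range m, i = m * (m + 1) / 2 := by
  rw [← sum_tsub_distrib _ fun i _ => by omega,
    sum_congr rfl fun i _ => (by omega : 2 * i + 1 - i = i + 1),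
    ← (sum_range_succ' (fun i => i) m).trans (add_zero _), sum_range_id, Nat.add_sub_cancel,
    mul_comm]

theorem wronskian_odd_monomials_general (m : ℕ) (x : ℝ) :
    Matrix.det (Matrix.of fun i j : Fin m =>
        iteratedDeriv (i : ℕ) (fun t : ℝ => t ^ (2 * (j : ℕ) + 1)) x)
      = (∏ j ∈ Finset.Icc 1 (m - 1), Nat.factorial (m - j) : ℕ) *
          2 ^ (m * (m - 1) / 2) * x ^ (m * (m + 1) / 2) := by
  simp only [iteratedDeriv_pow]
  rw [det_of_mul_pow_sub _ x (fun j : Fin m => 2 * (j : ℕ) + 1) (fun i => i)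
      fun i j h => by simp [descFactorial_eq_zero_iff_lt.mpr h],
    det_descFactorial_eq_det_vandermonde]
  have hnodes : (fun i : Fin m => ((2 * (i : ℕ) + 1 : ℕ) : ℝ)) =
      fun i : Fin m => 2 * (i : ℝ) + 1 := by
    ext i
    push_cast
    rfl
  rw [hnodes, det_vandermonde_add (fun i : Fin m => 2 * (i : ℝ)), det_vandermonde_const_mul,
    det_vandermonde_id_eq_superFactorial_pred, Fin.sum_univ_eq_sum_range (fun j => 2 * j + 1),
    Fin.sum_univ_eq_sum_range (fun i => i), sum_range_odd_sub_sum_range_id,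
    prod_Icc_factorial_sub_eq_superFactorial]
  ring

/-- The Wronskian of the monomials `x, x^3, ..., x^{2m-1}` equals
`(∏_{j=1}^{m-1} (m-j)!) · 2^{m(m-1)/2} · x^{m(m+1)/2}`. -/
theorem wronskian_odd_monomials (m : ℕ) (hm : 0 < m) (x : ℝ) :
    Matrix.det (Matrix.of fun i j : Fin m =>
        iteratedDeriv (i : ℕ) (fun t : ℝ => t ^ (2 * (j : ℕ) + 1)) x)
      = (∏ j ∈ Finset.Icc 1 (m - 1), Nat.factorial (m - j) : ℕ) *
          2 ^ (m * (m - 1) / 2) * x ^ (m * (m + 1) / 2) :=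
  wronskian_odd_monomials_general m x
end

section
/- The first m odd classical Hermite polynomials coincide with odd monomials up to their Wronskian: W[H_1(x), H_3(x), ..., H_{2m-1}(x)] = W[x, x^3, ..., x^{2m-1}]. -/
/-!
`H_{2j+1}` is an odd monic polynomial of degree `2j+1`, so `H_{2j+1} = ∑_{k ≤ j} T_{kj} x^{2k+1}`
with `T` upper unitriangular. Differentiation is linear, hence the Wronskian matrix of the odd
Hermite polynomials is that of the odd monomials times `T`, and `det T = 1`.
-/

open Polynomial

section IteratedDeriv

variable {𝕜 R : Type*} [NontriviallyNormedField 𝕜] [CommSemiring R] [Algebra R 𝕜]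

theorem Polynomial.iteratedDeriv_aeval (p : R[X]) (n : ℕ) :
    iteratedDeriv n (fun t : 𝕜 => aeval t p) = fun t => aeval t (derivative^[n] p) := by
  induction n with
  | zero => simp
  | succ n ih =>
    rw [iteratedDeriv_succ, ih, Function.iterate_succ_apply']
    funext t
    exact Polynomial.deriv_aeval _

theorem Polynomial.iteratedDeriv_aeval_sum_C_mul {ι : Type*} (s : Finset ι) (c : ι → R)
    (q : ι → R[X]) (n : ℕ) (x : 𝕜) :
    iteratedDeriv n (fun t => aeval t (∑ k ∈ s, C (c k) * q k)) x
      = ∑ k ∈ s, iteratedDeriv n (fun t => aeval t (q k)) x * algebraMap R 𝕜 (c k) := by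
  simp only [iteratedDeriv_aeval]
  rw [iterate_derivative_sum, map_sum]
  refine Finset.sum_congr rfl fun k _ => ?_
  rw [iterate_derivative_C_mul, map_mul, aeval_C, mul_comm]

end IteratedDeriv

theorem Polynomial.eq_sum_C_mul_X_pow_odd {R : Type*} [Semiring R] {p : R[X]} {m : ℕ}
    (h_even : ∀ k, p.coeff (2 * k) = 0) (h_deg : p.natDegree < 2 * m) :
    p = ∑ k : Fin m, C (p.coeff (2 * k + 1)) * X ^ (2 * (k : ℕ) + 1) := by
  ext n
  simp only [finsetSum_coeff, coeff_C_mul_X_pow]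
  obtain ⟨l, rfl | rfl⟩ := Nat.even_or_odd' n
  · rw [h_even, Finset.sum_eq_zero fun k _ => if_neg (by omega)]
  · by_cases hl : l < m
    · rw [Finset.sum_eq_single ⟨l, hl⟩
        (fun k _ hk => if_neg fun h => hk (Fin.ext (by dsimp only; omega))) (by simp), if_pos rfl]
    · rw [coeff_eq_zero_of_natDegree_lt (by omega),
        Finset.sum_eq_zero fun k _ => if_neg (by omega)]

theorem Polynomial.hermite_two_mul_add_one_eq_sum {j m : ℕ} (hj : j < m) :
    hermite (2 * j + 1) =
      ∑ k : Fin m, C ((hermite (2 * j + 1)).coeff (2 * k + 1)) * X ^ (2 * (k : ℕ) + 1) :=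
  eq_sum_C_mul_X_pow_odd (fun k => coeff_hermite_of_odd_add (by exists j + k; ring))
    (by rw [natDegree_hermite]; omega)

theorem Polynomial.det_coeff_hermite_two_mul_add_one (R : Type*) [CommRing R] (m : ℕ) :
    (Matrix.of fun k j : Fin m => ((hermite (2 * (j : ℕ) + 1)).coeff (2 * k + 1) : R)).det = 1 := by
  rw [Matrix.det_of_isUpperTriangular fun k j (h : j < k) => by
    rw [Matrix.of_apply, coeff_hermite_of_lt (by omega), Int.cast_zero]]
  simp only [Matrix.of_apply, coeff_hermite_self, Int.cast_one, Finset.prod_const_one]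

/-- `W[H_1, H_3, ..., H_{2m-1}] = W[x, x^3, ..., x^{2m-1}]`, where `H_n` is the
probabilist's Hermite polynomial. -/
theorem wronskian_odd_hermite_eq_wronskian_odd_monomials (m : ℕ) (x : ℝ) :
    Matrix.det (Matrix.of fun i j : Fin m =>
        iteratedDeriv (i : ℕ)
          (fun t : ℝ => Polynomial.aeval t (Polynomial.hermite (2 * (j : ℕ) + 1))) x)
      = Matrix.det (Matrix.of fun i j : Fin m =>
          iteratedDeriv (i : ℕ) (fun t : ℝ => t ^ (2 * (j : ℕ) + 1)) x) := by
  have h_factor : (Matrix.of fun i j : Fin m =>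
        iteratedDeriv (i : ℕ) (fun t : ℝ => aeval t (hermite (2 * (j : ℕ) + 1))) x)
      = (Matrix.of fun i j : Fin m => iteratedDeriv (i : ℕ) (fun t : ℝ => t ^ (2 * (j : ℕ) + 1)) x)
        * Matrix.of fun k j : Fin m => ((hermite (2 * (j : ℕ) + 1)).coeff (2 * k + 1) : ℝ) := by
    ext i j
    rw [Matrix.of_apply, hermite_two_mul_add_one_eq_sum j.isLt, iteratedDeriv_aeval_sum_C_mul]
    simp [Matrix.mul_apply]
  rw [h_factor, Matrix.det_mul, det_coeff_hermite_two_mul_add_one, mul_one]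
end

section
/- Let p(x) = ∑_{i=0}^n a_i x^{n-i} be a monic degree-n polynomial with complex coefficients satisfying the differential equation -p'' + x p' + (2m/x) p' = n p (as an identity of rational functions, m ∈ ℤ_{≥0}). Then all coefficients a_i are integers. -/
open Polynomial Finset

/-!
Comparing coefficients of `X ^ (k + 1)` turns the equation into the two-step recurrence
`(n - k) c_k = (k + 2) (2m - k - 1) c_(k+2)` for the coefficients `c_k` of `p`. Read downwards
from `c_n = 1`, it kills every `c_(n-2k-1)` and gives
`2^k k! c_(n-2k) = ∏_{j<k} (n - 2j) (2m + 1 - n + 2j)`.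
Since `n + (2m + 1 - n)` is odd, one of the two factors runs, up to sign, through an arithmetic
progression `2s, 2s - 2, …`, so its product is `2^k` times a product of `k` consecutive integers,
which `k!` divides.
-/

theorem factorial_dvd_prod_range_sub (r : ℤ) (k : ℕ) :
    (k.factorial : ℤ) ∣ ∏ j ∈ range k, (r - j) := by
  rw [← descPochhammer_eval_eq_prod_range, eval_eq_smeval,
    Ring.descPochhammer_eq_factorial_smul_choose, nsmul_eq_mul]
  exact dvd_mul_right _ _

theorem two_pow_mul_factorial_dvd_prod_range_two_mul_sub (s : ℤ) (k : ℕ) :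
    2 ^ k * (k.factorial : ℤ) ∣ ∏ j ∈ range k, (2 * s - 2 * j) := by
  calc 2 ^ k * (k.factorial : ℤ) ∣ 2 ^ k * ∏ j ∈ range k, (s - j) :=
        mul_dvd_mul_left _ (factorial_dvd_prod_range_sub s k)
    _ = ∏ j ∈ range k, (2 * (s - j)) := by rw [prod_mul_distrib, prod_const, card_range]
    _ = ∏ j ∈ range k, (2 * s - 2 * j) := prod_congr rfl fun _ _ => by ring

theorem two_pow_mul_factorial_dvd_prod_range_sub_mul_add {a b : ℤ} (hab : Odd (a + b))
    (k : ℕ) : 2 ^ k * (k.factorial : ℤ) ∣ ∏ j ∈ range k, ((a - 2 * j) * (b + 2 * j)) := by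
  rw [prod_mul_distrib]
  rcases Int.even_or_odd a with ⟨s, rfl⟩ | ha
  · rw [← two_mul]
    exact dvd_mul_of_dvd_left (two_pow_mul_factorial_dvd_prod_range_two_mul_sub s k) _
  · obtain ⟨t, ht⟩ : Even (-b) := even_neg.mpr ((Int.odd_add.mp hab).mp ha)
    have h : ∏ j ∈ range k, (b + 2 * j) = (-1) ^ k * ∏ j ∈ range k, (2 * t - 2 * j) :=
      calc ∏ j ∈ range k, (b + 2 * j) = ∏ j ∈ range k, -(2 * t - 2 * j) :=
            prod_congr rfl fun _ _ => by linear_combination -ht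
        _ = (-1) ^ k * ∏ j ∈ range k, (2 * t - 2 * j) := by rw [prod_neg, card_range]
    rw [h]
    exact dvd_mul_of_dvd_right
      (dvd_mul_of_dvd_right (two_pow_mul_factorial_dvd_prod_range_two_mul_sub t k) _) _

theorem coeff_X_mul_derivative {R : Type*} [Semiring R] (p : R[X]) (k : ℕ) :
    (X * derivative p).coeff k = k * p.coeff k := by
  rcases k with _ | k
  · simp
  · rw [coeff_X_mul, coeff_derivative]
    exact_mod_cast (Nat.cast_commute (k + 1) _).symm.eq

section ODE

variable {R : Type*} [CommRing R] {p : R[X]} {a b : R}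

theorem coeff_recurrence_of_ode
    (h : -(X * derivative (derivative p)) + X ^ 2 * derivative p + C a * derivative p
      = C b * (X * p)) (k : ℕ) :
    (b - k) * p.coeff k = (k + 2) * (a - k - 1) * p.coeff (k + 2) := by
  have hk := congrArg (coeff · (k + 1)) h
  simp only [coeff_add, coeff_neg, coeff_C_mul, coeff_X_mul, pow_two, mul_assoc,
    coeff_X_mul_derivative, coeff_derivative] at hk
  push_cast at hk
  linear_combination -hk

theorem coeff_sub_recurrence_of_ode {n : ℕ}
    (h : -(X * derivative (derivative p)) + X ^ 2 * derivative p + C a * derivative p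
      = C (n : R) * (X * p)) {j : ℕ} (hj : j + 2 ≤ n) :
    ((j : R) + 2) * p.coeff (n - (j + 2)) = (n - j) * (a + 1 - n + j) * p.coeff (n - j) := by
  have hk := coeff_recurrence_of_ode h (n - (j + 2))
  rw [show n - (j + 2) + 2 = n - j by omega, Nat.cast_sub hj] at hk
  push_cast at hk
  linear_combination hk

theorem coeff_natDegree_sub_one_eq_zero_of_ode {n : ℕ} (hdeg : p.natDegree = n) (hn : 1 ≤ n)
    (h : -(X * derivative (derivative p)) + X ^ 2 * derivative p + C a * derivative p
      = C (n : R) * (X * p)) :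
    p.coeff (n - 1) = 0 := by
  have hk := coeff_recurrence_of_ode h (n - 1)
  rw [show n - 1 + 2 = n + 1 by omega, coeff_eq_zero_of_natDegree_lt (n := n + 1) (by omega),
    mul_zero, Nat.cast_sub hn] at hk
  push_cast at hk
  linear_combination hk

end ODE

section TwoStepRecurrence

variable {R : Type*} {N : ℕ} {f b : ℕ → R}

theorem two_pow_mul_factorial_mul_apply_two_mul_of_recurrence [CommSemiring R]
    (hrec : ∀ j, j + 2 ≤ N → ((j : R) + 2) * b (j + 2) = f j * b j) {k : ℕ} (hk : 2 * k ≤ N) :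
    2 ^ k * k.factorial * b (2 * k) = (∏ i ∈ range k, f (2 * i)) * b 0 := by
  induction k with
  | zero => simp
  | succ k ih =>
    have hstep := hrec (2 * k) (by omega)
    rw [show 2 * k + 2 = 2 * (k + 1) by ring] at hstep
    push_cast at hstep
    calc 2 ^ (k + 1) * ((k + 1).factorial : R) * b (2 * (k + 1))
        = 2 ^ k * k.factorial * ((2 * k + 2) * b (2 * (k + 1))) := by
          rw [Nat.factorial_succ]; push_cast; ring
      _ = (∏ i ∈ range (k + 1), f (2 * i)) * b 0 := by
          rw [hstep, prod_range_succ, mul_right_comm _ (f _), ← ih (by omega)]; ring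

theorem apply_two_mul_add_one_eq_zero_of_recurrence [Semiring R] [NoZeroDivisors R] [CharZero R]
    (hrec : ∀ j, j + 2 ≤ N → ((j : R) + 2) * b (j + 2) = f j * b j) (h1 : b 1 = 0) {k : ℕ}
    (hk : 2 * k + 1 ≤ N) : b (2 * k + 1) = 0 := by
  induction k with
  | zero => simpa using h1
  | succ k ih =>
    have hstep := hrec (2 * k + 1) (by omega)
    rw [ih (by omega), mul_zero] at hstep
    exact (mul_eq_zero.mp hstep).resolve_left (by exact_mod_cast (2 * k + 2).succ_ne_zero)

end TwoStepRecurrence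

/-- if a monic polynomial `p ∈ ℂ[x]` of degree `n` satisfies the differential
equation `-p'' + x p' + (2m/x) p' = n p` (as an identity of rational functions, i.e.
`-x p'' + x² p' + 2m p' = n x p` as polynomials), then all its coefficients are integers. -/
theorem integrality_of_mHermite_eigenpolynomial (m n : ℕ) (p : Polynomial ℂ)
    (hmonic : p.Monic) (hdeg : p.natDegree = n)
    (hode : -(X * derivative (derivative p)) + X ^ 2 * derivative p
        + C (2 * (m : ℂ)) * derivative p = C (n : ℂ) * (X * p)) :
    ∀ i : ℕ, ∃ z : ℤ, p.coeff i = (z : ℂ) := by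
  intro i
  rcases lt_or_ge n i with hi | hi
  · exact ⟨0, by simp [coeff_eq_zero_of_natDegree_lt (hdeg ▸ hi)]⟩
  have hrec : ∀ j, j + 2 ≤ n → ((j : ℂ) + 2) * p.coeff (n - (j + 2))
      = ((((n : ℤ) - j) * (2 * m + 1 - n + j) : ℤ) : ℂ) * p.coeff (n - j) := fun j hj => by
    push_cast
    exact coeff_sub_recurrence_of_ode hode hj
  obtain ⟨k, hk | hk⟩ := Nat.even_or_odd' (n - i)
  · have hclosed := two_pow_mul_factorial_mul_apply_two_mul_of_recurrence
      (b := fun j => p.coeff (n - j)) hrec (k := k) (by omega)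
    obtain ⟨z, hz⟩ := two_pow_mul_factorial_dvd_prod_range_sub_mul_add
      (a := n) (b := 2 * m + 1 - n) ⟨m, by ring⟩ k
    have hlead : p.coeff n = 1 := hdeg ▸ hmonic.coeff_natDegree
    have hscale_ne_zero : (2 : ℂ) ^ k * k.factorial ≠ 0 := by simp [Nat.factorial_ne_zero]
    refine ⟨z, mul_left_cancel₀ hscale_ne_zero ?_⟩
    simp only [show n - 2 * k = i by omega, Nat.sub_zero, hlead, mul_one] at hclosed
    rw [hclosed]
    exact_mod_cast hz
  · refine ⟨0, ?_⟩
    have hodd := apply_two_mul_add_one_eq_zero_of_recurrence (b := fun j => p.coeff (n - j))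
      hrec (coeff_natDegree_sub_one_eq_zero_of_ode hdeg (by omega) hode) (k := k) (by omega)
    simpa [show n - (2 * k + 1) = i by omega] using hodd
end

section
/- The power sums σ_k = ∑_{i=1}^N π_i^k of Polychronakos' operators pairwise commute: [σ_k, σ_l] = 0 for all k, l ≥ 0. -/
open MvPolynomial

/-- The type `A_{N-1}` rational Dunkl operator `D_i = ∂_i + m ∑_{j≠i} (x_i-x_j)⁻¹(s_{ij}-1)`
with parameter `m`, acting on functions of `N` real variables. -/
noncomputable def dunklOp (N : ℕ) (m : ℝ) (i : Fin N)
    (f : (Fin N → ℝ) → ℝ) : (Fin N → ℝ) → ℝ :=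
  fun x => fderiv ℝ f x (Pi.single i 1) +
    m * ∑ j ∈ Finset.univ.erase i, (f (x ∘ Equiv.swap i j) - f x) / (x i - x j)

/-- Polychronakos' operator `π_i = x_i D_i`. -/
noncomputable def polychronakosOp (N : ℕ) (m : ℝ) (i : Fin N)
    (f : (Fin N → ℝ) → ℝ) : (Fin N → ℝ) → ℝ :=
  fun x => x i * dunklOp N m i f x

/-- The power sum `σ_k = ∑_{i=1}^N π_i^k` of Polychronakos' operators. -/
noncomputable def sigmaOp (N : ℕ) (m : ℝ) (k : ℕ)
    (f : (Fin N → ℝ) → ℝ) : (Fin N → ℝ) → ℝ :=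
  fun x => ∑ i : Fin N, (polychronakosOp N m i)^[k] f x

/-!
On polynomials, `πᵢ = xᵢ Dᵢ` with `Dᵢ = ∂ᵢ + m ∑_{j ≠ i} Δᵢⱼ`, where
`Δᵢⱼ p = (sᵢⱼ p - p) / (xᵢ - xⱼ)` is the divided difference. The Dunkl operators commute: the
first-order cross terms cancel because `∂ᵢ + ∂ⱼ` commutes with `Δᵢⱼ`, and the second-order ones
because of a three-term identity between the `Δ`'s on three indices. With `Dᵢ xⱼ = xⱼ Dᵢ + m sᵢⱼ`
and `sᵢⱼ Dᵢ = Dⱼ sᵢⱼ` this gives the exchange relations `sᵢⱼ πᵢ = πⱼ sᵢⱼ` and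
`[πᵢ, πⱼ] = (πᵢ - πⱼ) m sᵢⱼ`. These alone force `[πᵢᵖ, πⱼ^q] + [πⱼᵖ, πᵢ^q]` to be a sum of
expressions of the same shape and lower total degree, times `m sᵢⱼ`, so it vanishes; summing over
`i, j` gives `[σₖ, σₗ] = 0`. Off the diagonals, the operators of the statement act on polynomial
functions through these polynomial operators.
-/

open Equiv Finset

theorem Finset.sum_range_sub_shift_eq_sum_range_sub_reflect {M : Type*} [AddCommGroup M]
    (g : ℕ → M) (p q : ℕ) :
    ∑ r ∈ range q, (g r - g (p + r)) = ∑ r ∈ range p, (g r - g (p + q - 1 - r)) := by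
  have hpq := sum_range_add g p q
  rw [add_comm p q, sum_range_add] at hpq
  have hrefl : ∑ r ∈ range p, g (q + r) = ∑ r ∈ range p, g (p + q - 1 - r) := by
    rw [← sum_range_reflect]
    exact sum_congr rfl fun r hr => by have := mem_range.1 hr; congr 1; omega
  rw [sum_sub_distrib, sum_sub_distrib, ← hrefl]
  linear_combination (norm := abel) hpq

section ExchangePair

attribute [local instance] LieRing.ofAssociativeRing

variable {A : Type*} [Ring A]

/- Mathlib's `commute_iff_lie_eq` is stated for `Ring.instBracket`, which the Lie-algebra API
(`lie_add`, `lie_sum`, ...) does not rewrite; these restate it for the bracket used here. -/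
theorem Commute.lie_eq_zero {x y : A} (h : Commute x y) : ⁅x, y⁆ = 0 :=
  commute_iff_lie_eq.1 h

theorem commute_of_lie_eq_zero {x y : A} (h : ⁅x, y⁆ = 0) : Commute x y :=
  commute_iff_lie_eq.2 h

/-- Used with `a = πᵢ`, `b = πⱼ`, `t = m sᵢⱼ`. -/
structure IsExchangePair (a b t : A) : Prop where
  semiconjBy_left : SemiconjBy t a b
  semiconjBy_right : SemiconjBy t b a
  lie_eq : ⁅a, b⁆ = (a - b) * t

namespace IsExchangePair

variable {a b t : A}

theorem symm (h : IsExchangePair a b t) : IsExchangePair b a t where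
  semiconjBy_left := h.semiconjBy_right
  semiconjBy_right := h.semiconjBy_left
  lie_eq := by rw [← lie_skew, h.lie_eq]; noncomm_ring

theorem lie_pow_left (h : IsExchangePair a b t) (p : ℕ) : ⁅a ^ p, b⁆ = (a ^ p - b ^ p) * t := by
  induction p with
  | zero => simp [Ring.lie_def]
  | succ p ih =>
    calc ⁅a ^ (p + 1), b⁆ = a * ⁅a ^ p, b⁆ + ⁅a, b⁆ * a ^ p := by
          simp only [pow_succ', Ring.lie_def]; noncomm_ring
      _ = a * (a ^ p - b ^ p) * t + (a - b) * (t * a ^ p) := by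
          rw [ih, h.lie_eq]; noncomm_ring
      _ = (a ^ (p + 1) - b ^ (p + 1)) * t := by
          rw [(h.semiconjBy_left.pow_right p).eq, pow_succ', pow_succ']; noncomm_ring

theorem lie_pow_pow (h : IsExchangePair a b t) (p q : ℕ) :
    ⁅a ^ p, b ^ q⁆ = (∑ r ∈ range q, b ^ r * (a ^ p - b ^ p) * a ^ (q - 1 - r)) * t := by
  induction q with
  | zero => simp [Ring.lie_def]
  | succ q ih =>
    have hsum : ∑ r ∈ range q, b ^ r * (a ^ p - b ^ p) * a ^ (q - r)
        = (∑ r ∈ range q, b ^ r * (a ^ p - b ^ p) * a ^ (q - 1 - r)) * a := by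
      rw [sum_mul]
      refine sum_congr rfl fun r hr => ?_
      rw [mul_assoc _ (a ^ _), ← pow_succ]
      congr 2
      have := mem_range.1 hr
      omega
    calc ⁅a ^ p, b ^ (q + 1)⁆ = ⁅a ^ p, b ^ q⁆ * b + b ^ q * ⁅a ^ p, b⁆ := by
          simp only [pow_succ, Ring.lie_def]; noncomm_ring
      _ = ((∑ r ∈ range q, b ^ r * (a ^ p - b ^ p) * a ^ (q - 1 - r)) * a
            + b ^ q * (a ^ p - b ^ p)) * t := by
          rw [ih, h.lie_pow_left, mul_assoc _ t b, h.semiconjBy_right.eq]; noncomm_ring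
      _ = _ := by simp [sum_range_succ, hsum]

theorem lie_pow_add_lie_pow (h : IsExchangePair a b t) (p q : ℕ) :
    ⁅a ^ p, b ^ q⁆ + ⁅b ^ p, a ^ q⁆
      = (∑ r ∈ range p, (⁅a ^ r, b ^ (p + q - 1 - r)⁆ + ⁅b ^ r, a ^ (p + q - 1 - r)⁆)) * t := by
  set g : ℕ → A := fun r => b ^ r * a ^ (p + q - 1 - r) + a ^ r * b ^ (p + q - 1 - r)
  rw [h.lie_pow_pow, h.symm.lie_pow_pow, ← add_mul, ← sum_add_distrib]
  congr 1
  calc _ = ∑ r ∈ range q, (g r - g (p + r)) := sum_congr rfl fun r hr => by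
          have := mem_range.1 hr
          simp only [g, show p + q - 1 - r = p + (q - 1 - r) by omega,
            show p + q - 1 - (r + p) = q - 1 - r by omega, add_comm p r, pow_add]
          noncomm_ring
    _ = ∑ r ∈ range p, (g r - g (p + q - 1 - r)) :=
          sum_range_sub_shift_eq_sum_range_sub_reflect g p q
    _ = _ := sum_congr rfl fun r hr => by
          have := mem_range.1 hr
          simp only [g, Ring.lie_def, show p + q - 1 - (p + q - 1 - r) = r by omega]
          abel

theorem lie_pow_add_lie_pow_eq_zero (h : IsExchangePair a b t) (p q : ℕ) :
    ⁅a ^ p, b ^ q⁆ + ⁅b ^ p, a ^ q⁆ = 0 := by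
  induction hn : p + q using Nat.strong_induction_on generalizing p q with
  | _ n ih =>
    rw [h.lie_pow_add_lie_pow, sum_eq_zero, zero_mul]
    intro r hr
    have := mem_range.1 hr
    exact ih (p + q - 1) (by omega) r _ (by omega)

end IsExchangePair

theorem commute_sum_pow_of_isExchangePair {ι : Type*} [Fintype ι] {a : ι → A} {t : ι → ι → A}
    (h : ∀ i j, i ≠ j → IsExchangePair (a i) (a j) (t i j)) (k l : ℕ) :
    Commute (∑ i, a i ^ k) (∑ i, a i ^ l) := by
  have hdiag : ∀ i, ⁅a i ^ k, a i ^ l⁆ = 0 := fun i =>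
    ((Commute.refl (a i)).pow_pow k l).lie_eq_zero
  refine commute_of_lie_eq_zero ?_
  rw [sum_lie_sum, ← Fintype.sum_prod_type']
  refine sum_ninvolution Prod.swap (fun x => ?_) (fun x hx hswap => hx ?_) (fun _ => mem_univ _)
    Prod.swap_swap
  · rcases eq_or_ne x.1 x.2 with hx | hx
    · simp [hx, hdiag]
    · exact (h _ _ hx).lie_pow_add_lie_pow_eq_zero k l
  · rw [← Prod.fst_swap, hswap, hdiag]

end ExchangePair

namespace MvPolynomial

variable {σ R : Type*} [CommRing R]

theorem X_sub_X_ne_zero [Nontrivial R] {i j : σ} (h : i ≠ j) : (X i - X j : MvPolynomial σ R) ≠ 0 :=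
  sub_ne_zero.2 fun h' => h (X_injective h')

variable [DecidableEq σ]

theorem X_sub_X_dvd_rename_swap_sub (i j : σ) (p : MvPolynomial σ R) :
    X i - X j ∣ rename (swap i j) p - p := by
  induction p using MvPolynomial.induction_on with
  | C a => simp
  | add p q hp hq =>
    rw [map_add, add_sub_add_comm]
    exact dvd_add hp hq
  | mul_X p k hp =>
    have hk : X i - X j ∣ (X (swap i j k) - X k : MvPolynomial σ R) := by
      rcases eq_or_ne k i with rfl | hki
      · exact ⟨-1, by simp⟩
      rcases eq_or_ne k j with rfl | hkj
      · simp
      · simp [swap_apply_of_ne_of_ne hki hkj]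
    rw [map_mul, rename_X,
      show rename (swap i j) p * X (swap i j k) - p * X k
        = rename (swap i j) p * (X (swap i j k) - X k) + (rename (swap i j) p - p) * X k by ring]
    exact dvd_add (hk.mul_left _) (hp.mul_right _)

theorem pderiv_commute (i j : σ) :
    Commute (pderiv (R := R) i : Module.End R (MvPolynomial σ R)) (pderiv (R := R) j) := by
  have : ⁅pderiv (R := R) i, pderiv j⁆ = 0 :=
    derivation_ext fun k => by
      rw [Derivation.commutator_apply, pderiv_X, pderiv_X, Pi.single_apply, Pi.single_apply]
      split_ifs <;> simp
  rw [commute_iff_lie_eq, ← Derivation.commutator_coe_linear_map, this]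
  rfl

variable [IsDomain R]

/-- The divided difference `Δᵢⱼ p = (sᵢⱼ p - p) / (xᵢ - xⱼ)`; it is set to `0` when `i = j`,
where the division is meaningless. -/
noncomputable def divDiff (i j : σ) : Module.End R (MvPolynomial σ R) where
  toFun p := if i = j then 0 else (X_sub_X_dvd_rename_swap_sub i j p).choose
  map_add' p q := by
    split_ifs with h
    · simp
    apply mul_left_cancel₀ (X_sub_X_ne_zero h)
    rw [mul_add, ← (X_sub_X_dvd_rename_swap_sub i j _).choose_spec,
      ← (X_sub_X_dvd_rename_swap_sub i j _).choose_spec,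
      ← (X_sub_X_dvd_rename_swap_sub i j _).choose_spec, map_add]
    ring
  map_smul' c p := by
    split_ifs with h
    · simp
    apply mul_left_cancel₀ (X_sub_X_ne_zero h)
    rw [RingHom.id_apply, mul_smul_comm, ← (X_sub_X_dvd_rename_swap_sub i j _).choose_spec,
      ← (X_sub_X_dvd_rename_swap_sub i j _).choose_spec, map_smul, smul_sub]

@[simp]
theorem divDiff_self (i : σ) : divDiff i i = (0 : Module.End R (MvPolynomial σ R)) :=
  LinearMap.ext fun p => by simp [divDiff]

theorem X_sub_X_mul_divDiff (i j : σ) (p : MvPolynomial σ R) :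
    (X i - X j) * divDiff i j p = rename (swap i j) p - p := by
  rcases eq_or_ne i j with rfl | h
  · simp
  · simp only [divDiff, LinearMap.coe_mk, AddHom.coe_mk, if_neg h]
    exact (X_sub_X_dvd_rename_swap_sub i j p).choose_spec.symm

variable {i j : σ}

theorem divDiff_eq_of_X_sub_X_mul_eq (h : i ≠ j) {p q : MvPolynomial σ R}
    (hq : (X i - X j) * q = rename (swap i j) p - p) : divDiff i j p = q :=
  mul_left_cancel₀ (X_sub_X_ne_zero h) (by rw [X_sub_X_mul_divDiff, hq])

theorem divDiff_antisymm (i j : σ) :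
    divDiff j i = -(divDiff i j : Module.End R (MvPolynomial σ R)) := by
  rcases eq_or_ne i j with rfl | h
  · simp
  refine LinearMap.ext fun p => divDiff_eq_of_X_sub_X_mul_eq h.symm ?_
  rw [LinearMap.neg_apply, swap_comm, ← X_sub_X_mul_divDiff]
  ring

theorem divDiff_mul (f p : MvPolynomial σ R) :
    divDiff i j (f * p) = f * divDiff i j p + divDiff i j f * rename (swap i j) p := by
  rcases eq_or_ne i j with rfl | h
  · simp
  refine divDiff_eq_of_X_sub_X_mul_eq h ?_
  rw [map_mul]
  linear_combination f * X_sub_X_mul_divDiff i j p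
    + rename (swap i j) p * X_sub_X_mul_divDiff i j f

theorem divDiff_X_of_ne_left (hij : i ≠ j) {k : σ} (hki : k ≠ i) :
    divDiff i j (X k : MvPolynomial σ R) = if k = j then 1 else 0 := by
  refine divDiff_eq_of_X_sub_X_mul_eq hij ?_
  split_ifs with hkj
  · simp [hkj]
  · simp [swap_apply_of_ne_of_ne hki hkj]

theorem rename_divDiff (τ : Perm σ) (i j : σ) (p : MvPolynomial σ R) :
    rename τ (divDiff i j p) = divDiff (τ i) (τ j) (rename τ p) := by
  rcases eq_or_ne i j with rfl | h
  · simp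
  refine (divDiff_eq_of_X_sub_X_mul_eq (τ.injective.ne h) ?_).symm
  rw [← rename_X, ← rename_X, ← map_sub, ← map_mul, X_sub_X_mul_divDiff, map_sub,
    rename_rename, rename_rename, ← Perm.coe_mul, ← Perm.coe_mul, mul_swap_eq_swap_mul]

theorem commute_pderiv_divDiff {k : σ} (hki : k ≠ i) (hkj : k ≠ j) :
    Commute (pderiv (R := R) k : Module.End R (MvPolynomial σ R)) (divDiff i j) := by
  rcases eq_or_ne i j with rfl | h
  · simp
  refine LinearMap.ext fun p => (divDiff_eq_of_X_sub_X_mul_eq h ?_).symm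
  have hs : pderiv k (rename (swap i j) p) = rename (swap i j) (pderiv k p) := by
    simpa [swap_apply_of_ne_of_ne hki hkj] using pderiv_rename (swap i j).injective k p
  have := congrArg (pderiv k) (X_sub_X_mul_divDiff i j p)
  simp only [Derivation.leibniz, smul_eq_mul, map_sub, pderiv_X_of_ne hki.symm,
    pderiv_X_of_ne hkj.symm, sub_self, mul_zero, add_zero, hs] at this
  simpa only [Module.End.mul_apply, Derivation.coeFn_coe] using this

theorem commute_pderiv_add_pderiv_divDiff (i j : σ) :
    Commute ((pderiv (R := R) i : Module.End R (MvPolynomial σ R)) + pderiv (R := R) j)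
      (divDiff i j) := by
  rcases eq_or_ne i j with rfl | h
  · simp
  refine LinearMap.ext fun p => (divDiff_eq_of_X_sub_X_mul_eq h ?_).symm
  have hsi : pderiv i (rename (swap i j) p) = rename (swap i j) (pderiv j p) := by
    simpa using pderiv_rename (swap i j).injective j p
  have hsj : pderiv j (rename (swap i j) p) = rename (swap i j) (pderiv i p) := by
    simpa using pderiv_rename (swap i j).injective i p
  have := congrArg (fun q => pderiv i q + pderiv j q) (X_sub_X_mul_divDiff i j p)
  simp only [Derivation.leibniz, smul_eq_mul, map_sub, pderiv_X_self, pderiv_X_of_ne h,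
    pderiv_X_of_ne h.symm, sub_zero, zero_sub, mul_one, mul_neg, hsi, hsj] at this
  simp only [Module.End.mul_apply, LinearMap.add_apply, Derivation.coeFn_coe, map_add]
  linear_combination this

theorem commute_divDiff_divDiff {k l : σ} (hik : i ≠ k) (hil : i ≠ l) (hjk : j ≠ k)
    (hjl : j ≠ l) : Commute (divDiff i j : Module.End R (MvPolynomial σ R)) (divDiff k l) := by
  rcases eq_or_ne i j with rfl | hij
  · simp
  rcases eq_or_ne k l with rfl | hkl
  · simp
  refine LinearMap.ext fun p => divDiff_eq_of_X_sub_X_mul_eq hij ?_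
  have hX : divDiff k l (X i - X j : MvPolynomial σ R) = 0 := by
    rw [map_sub, divDiff_X_of_ne_left hkl hik, divDiff_X_of_ne_left hkl hjk, if_neg hil,
      if_neg hjl, sub_self]
  rw [rename_divDiff, swap_apply_of_ne_of_ne hik.symm hjk.symm,
    swap_apply_of_ne_of_ne hil.symm hjl.symm, ← map_sub, ← X_sub_X_mul_divDiff, divDiff_mul, hX,
    zero_mul, add_zero]
  rfl

theorem X_sub_X_mul_divDiff_divDiff (i j a b : σ) (p : MvPolynomial σ R) :
    (X i - X j) * (X a - X b) * (X (swap i j a) - X (swap i j b)) *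
        divDiff i j (divDiff a b p)
      = (X a - X b) * (rename (swap i j * swap a b) p - rename (swap i j) p)
        - (X (swap i j a) - X (swap i j b)) * (rename (swap a b) p - p) := by
  have hq := X_sub_X_mul_divDiff i j (divDiff a b p)
  have hab := X_sub_X_mul_divDiff a b p
  have hsab := X_sub_X_mul_divDiff (swap i j a) (swap i j b) (rename (swap i j) p)
  rw [rename_rename, ← Perm.coe_mul, ← mul_swap_eq_swap_mul] at hsab
  rw [rename_divDiff] at hq
  linear_combination (X a - X b) * (X (swap i j a) - X (swap i j b)) * hq
    + (X a - X b) * hsab - (X (swap i j a) - X (swap i j b)) * hab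

section

attribute [local instance] LieRing.ofAssociativeRing

theorem lie_divDiff_triple_eq_zero {k : σ} (hij : i ≠ j) (hik : i ≠ k) (hjk : j ≠ k) :
    ⁅divDiff (R := R) i j, divDiff (R := R) j k⁆ + ⁅divDiff (R := R) i k, divDiff (R := R) j i⁆
      + ⁅divDiff (R := R) i k, divDiff (R := R) j k⁆ = 0 := by
  refine LinearMap.ext fun p => ?_
  have hA₁ : swap i j * swap j k = swap i k * swap i j := by
    rw [mul_swap_eq_swap_mul, swap_apply_right, swap_apply_of_ne_of_ne hik.symm hjk.symm]
  have hA₂ : swap j k * swap i k = swap i k * swap i j := by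
    rw [mul_swap_eq_swap_mul, swap_apply_right, swap_apply_of_ne_of_ne hij hik, hA₁]
  have hB₁ : swap j k * swap i j = swap i k * swap j k := by
    rw [mul_swap_eq_swap_mul, swap_apply_left, swap_apply_of_ne_of_ne hij hik]
  have hB₂ : swap i j * swap i k = swap i k * swap j k := by
    rw [mul_swap_eq_swap_mul, swap_apply_left, swap_apply_of_ne_of_ne hik.symm hjk.symm, hB₁]
  have e₁ := X_sub_X_mul_divDiff_divDiff i j j k p
  have e₂ := X_sub_X_mul_divDiff_divDiff j k i j p
  have e₃ := X_sub_X_mul_divDiff_divDiff i k j i p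
  have e₄ := X_sub_X_mul_divDiff_divDiff j i i k p
  have e₅ := X_sub_X_mul_divDiff_divDiff i k j k p
  have e₆ := X_sub_X_mul_divDiff_divDiff j k i k p
  simp only [swap_apply_left, swap_apply_right, swap_apply_of_ne_of_ne hij hik,
    swap_apply_of_ne_of_ne hij.symm hjk, swap_apply_of_ne_of_ne hik.symm hjk.symm,
    swap_comm j i, hA₁, hA₂, hB₁, hB₂] at e₁ e₂ e₃ e₄ e₅ e₆
  apply mul_left_cancel₀ (mul_ne_zero (mul_ne_zero (X_sub_X_ne_zero (R := R) hij)
    (X_sub_X_ne_zero hjk)) (X_sub_X_ne_zero hik))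
  simp only [LinearMap.add_apply, Ring.lie_def, LinearMap.sub_apply, Module.End.mul_apply,
    LinearMap.zero_apply, mul_zero]
  linear_combination e₁ - e₂ - e₃ + e₄ - e₅ - e₆

end

variable [Fintype σ]

noncomputable def dunkl (m : R) (i : σ) : Module.End R (MvPolynomial σ R) :=
  pderiv (R := R) i + m • ∑ j ∈ univ.erase i, divDiff (R := R) i j

theorem rename_mul_dunkl (m : R) (τ : Perm σ) (i : σ) :
    (rename τ).toLinearMap * dunkl m i = dunkl m (τ i) * (rename τ).toLinearMap := by
  refine LinearMap.ext fun p => ?_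
  simp only [dunkl, Module.End.mul_apply, AlgHom.toLinearMap_apply, LinearMap.add_apply,
    LinearMap.smul_apply, LinearMap.sum_apply, map_add, map_smul, map_sum, rename_divDiff,
    Derivation.coeFn_coe]
  congr 1
  · exact (pderiv_rename τ.injective i p).symm
  · exact congrArg (m • ·) (sum_equiv τ (by simp) (by simp))

theorem dunkl_mul_X (m : R) (hij : i ≠ j) :
    dunkl m i * LinearMap.mulLeft R (X j)
      = LinearMap.mulLeft R (X j) * dunkl m i + m • (rename (swap i j)).toLinearMap := by
  refine LinearMap.ext fun p => ?_
  have hsum : ∑ l ∈ univ.erase i, divDiff i l (X j * p)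
      = X j * ∑ l ∈ univ.erase i, divDiff i l p + rename (swap i j) p := by
    simp only [divDiff_mul, sum_add_distrib, mul_sum]
    congr 1
    rw [sum_congr rfl fun l hl => by
      rw [divDiff_X_of_ne_left (mem_erase.1 hl).1.symm hij.symm, ite_mul, one_mul, zero_mul]]
    rw [sum_ite_eq, if_pos (mem_erase.2 ⟨hij.symm, mem_univ j⟩)]
  simp only [dunkl, Module.End.mul_apply, LinearMap.add_apply, LinearMap.smul_apply,
    LinearMap.sum_apply, LinearMap.mulLeft_apply, AlgHom.toLinearMap_apply, hsum,
    Derivation.coeFn_coe, Derivation.leibniz, pderiv_X_of_ne hij.symm, smul_zero, add_zero,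
    smul_eq_C_mul]
  ring

noncomputable def polychronakos (m : R) (i : σ) : Module.End R (MvPolynomial σ R) :=
  LinearMap.mulLeft R (X i) * dunkl m i

theorem rename_mul_polychronakos (m : R) (τ : Perm σ) (i : σ) :
    (rename τ).toLinearMap * polychronakos m i
      = polychronakos m (τ i) * (rename τ).toLinearMap := by
  refine LinearMap.ext fun p => ?_
  have h := LinearMap.congr_fun (rename_mul_dunkl m τ i) p
  simp only [Module.End.mul_apply, AlgHom.toLinearMap_apply] at h
  simp only [polychronakos, Module.End.mul_apply, AlgHom.toLinearMap_apply,
    LinearMap.mulLeft_apply, map_mul, rename_X, h]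

section Commutators

attribute [local instance] LieRing.ofAssociativeRing

theorem lie_pderiv_sum_divDiff_add_lie_sum_divDiff_pderiv (hij : i ≠ j) :
    ⁅(pderiv (R := R) i : Module.End R (MvPolynomial σ R)),
        ∑ l ∈ univ.erase j, divDiff (R := R) j l⁆
      + ⁅∑ l ∈ univ.erase i, divDiff (R := R) i l,
        (pderiv (R := R) j : Module.End R (MvPolynomial σ R))⁆ = 0 := by
  rw [← add_sum_erase _ _ (mem_erase.2 ⟨hij.symm, mem_univ j⟩),
    ← add_sum_erase _ _ (mem_erase.2 ⟨hij, mem_univ i⟩), erase_right_comm (a := j) (b := i)]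
  simp only [lie_add, add_lie, lie_sum, sum_lie]
  have hK : ∀ k ∈ (univ.erase i).erase j, k ≠ i ∧ k ≠ j := fun k hk => by
    simp only [mem_erase] at hk; exact ⟨hk.2.1, hk.1⟩
  rw [sum_eq_zero fun k hk => (commute_pderiv_divDiff hij (hK k hk).1.symm).lie_eq_zero,
    sum_eq_zero fun k hk => (commute_pderiv_divDiff hij.symm (hK k hk).2.symm).symm.lie_eq_zero,
    divDiff_antisymm, lie_neg, ← lie_skew, neg_neg, add_zero, add_zero]
  rw [← lie_add, (commute_pderiv_add_pderiv_divDiff i j).symm.lie_eq_zero]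

theorem lie_sum_divDiff_sum_divDiff (hij : i ≠ j) :
    ⁅∑ l ∈ univ.erase i, divDiff (R := R) i l, ∑ l ∈ univ.erase j, divDiff (R := R) j l⁆ = 0 := by
  rw [← add_sum_erase _ _ (mem_erase.2 ⟨hij.symm, mem_univ j⟩),
    ← add_sum_erase _ _ (mem_erase.2 ⟨hij, mem_univ i⟩), erase_right_comm (a := j) (b := i)]
  have hK : ∀ k ∈ (univ.erase i).erase j, k ≠ i ∧ k ≠ j := fun k hk => by
    simp only [mem_erase] at hk; exact ⟨hk.2.1, hk.1⟩
  have hdiag : ∀ k ∈ (univ.erase i).erase j, ∑ l ∈ (univ.erase i).erase j,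
      ⁅divDiff (R := R) i l, divDiff (R := R) j k⁆ = ⁅divDiff i k, divDiff j k⁆ := fun k hk =>
    sum_eq_single_of_mem k hk fun l hl hlk => (commute_divDiff_divDiff hij (hK k hk).1.symm
      (hK l hl).2 hlk).lie_eq_zero
  have hij_ji : ⁅divDiff (R := R) i j, divDiff (R := R) j i⁆ = 0 := by
    rw [divDiff_antisymm i j, lie_neg, lie_self, neg_zero]
  simp only [lie_add, add_lie, lie_sum, sum_lie]
  rw [hij_ji, zero_add, ← sum_add_distrib]
  refine sum_eq_zero fun k hk => ?_
  rw [hdiag k hk, add_left_comm, ← add_assoc]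
  exact lie_divDiff_triple_eq_zero hij (hK k hk).1.symm (hK k hk).2.symm

theorem dunkl_commute (m : R) (i j : σ) : Commute (dunkl m i) (dunkl m j) := by
  rcases eq_or_ne i j with rfl | hij
  · exact Commute.refl _
  refine commute_of_lie_eq_zero ?_
  have hexpand : ⁅dunkl m i, dunkl m j⁆
      = ⁅(pderiv (R := R) i : Module.End R (MvPolynomial σ R)),
          (pderiv (R := R) j : Module.End R (MvPolynomial σ R))⁆
        + m • (⁅(pderiv (R := R) i : Module.End R (MvPolynomial σ R)),
            ∑ l ∈ univ.erase j, divDiff (R := R) j l⁆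
          + ⁅∑ l ∈ univ.erase i, divDiff (R := R) i l,
            (pderiv (R := R) j : Module.End R (MvPolynomial σ R))⁆)
        + (m * m) • ⁅∑ l ∈ univ.erase i, divDiff (R := R) i l,
            ∑ l ∈ univ.erase j, divDiff (R := R) j l⁆ := by
    simp only [dunkl, Ring.lie_def, add_mul, mul_add, smul_mul_assoc, mul_smul_comm, smul_sub,
      smul_add, smul_smul]
    abel
  rw [hexpand, (pderiv_commute i j).lie_eq_zero, lie_sum_divDiff_sum_divDiff hij,
    lie_pderiv_sum_divDiff_add_lie_sum_divDiff_pderiv hij, smul_zero, smul_zero, add_zero,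
    add_zero]

theorem lie_polychronakos (m : R) (hij : i ≠ j) :
    ⁅polychronakos m i, polychronakos m j⁆
      = (polychronakos m i - polychronakos m j) * (m • (rename (swap i j)).toLinearMap) := by
  rw [polychronakos, polychronakos]
  set s : Module.End R (MvPolynomial σ R) := (rename (swap i j)).toLinearMap
  set μi := LinearMap.mulLeft R (X i : MvPolynomial σ R)
  set μj := LinearMap.mulLeft R (X j : MvPolynomial σ R)
  have hDμ_ij : dunkl m i * μj = μj * dunkl m i + m • s := dunkl_mul_X m hij
  have hDμ_ji : dunkl m j * μi = μi * dunkl m j + m • s := by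
    rw [dunkl_mul_X m hij.symm, swap_comm]
  have hsD_j : s * dunkl m j = dunkl m i * s := by
    rw [rename_mul_dunkl, swap_apply_right]
  have hsD_i : s * dunkl m i = dunkl m j * s := by
    rw [rename_mul_dunkl, swap_apply_left]
  have hμ : μi * μj = μj * μi := LinearMap.ext fun p => by simp [μi, μj, mul_left_comm]
  calc ⁅μi * dunkl m i, μj * dunkl m j⁆
      = μi * (dunkl m i * μj) * dunkl m j - μj * (dunkl m j * μi) * dunkl m i := by
        simp only [Ring.lie_def, mul_assoc]
    _ = μi * μj * (dunkl m i * dunkl m j) - μj * μi * (dunkl m j * dunkl m i)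
          + m • (μi * (s * dunkl m j) - μj * (s * dunkl m i)) := by
        rw [hDμ_ij, hDμ_ji]
        simp only [mul_add, add_mul, mul_smul_comm, smul_mul_assoc, mul_assoc, smul_sub]
        abel
    _ = (μi * dunkl m i - μj * dunkl m j) * (m • s) := by
        rw [hμ, (dunkl_commute m i j).eq, sub_self, zero_add, hsD_j, hsD_i]
        simp only [sub_mul, mul_smul_comm, mul_assoc, smul_sub]

theorem isExchangePair_polychronakos (m : R) (hij : i ≠ j) :
    IsExchangePair (polychronakos m i) (polychronakos m j)
      (m • (rename (swap i j)).toLinearMap) where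
  semiconjBy_left := by
    have h := rename_mul_polychronakos m (swap i j) i
    rw [swap_apply_left] at h
    exact SemiconjBy.smul_left h m
  semiconjBy_right := by
    have h := rename_mul_polychronakos m (swap i j) j
    rw [swap_apply_right] at h
    exact SemiconjBy.smul_left h m
  lie_eq := lie_polychronakos m hij

end Commutators

theorem commute_sum_polychronakos_pow (m : R) (k l : ℕ) :
    Commute (∑ i : σ, polychronakos m i ^ k) (∑ i : σ, polychronakos m i ^ l) :=
  commute_sum_pow_of_isExchangePair (fun _ _ hij => isExchangePair_polychronakos m hij) k l

end MvPolynomial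

theorem isOpen_setOf_injective {ι X : Type*} [Finite ι] [TopologicalSpace X] [T2Space X] :
    IsOpen {x : ι → X | Function.Injective x} := by
  have h : {x : ι → X | Function.Injective x} = ⋂ a, ⋂ b, {x | x a = x b → a = b} := by
    ext; simp [Function.Injective]
  rw [h]
  refine isOpen_iInter_of_finite fun a => isOpen_iInter_of_finite fun b => ?_
  by_cases hab : a = b
  · simp [hab]
  · simpa [hab] using isOpen_ne_fun (continuous_apply a) (continuous_apply b)

namespace MvPolynomial

variable {σ 𝕜 : Type*} [Fintype σ] [NontriviallyNormedField 𝕜]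

theorem hasFDerivAt_eval (p : MvPolynomial σ 𝕜) (x : σ → 𝕜) :
    HasFDerivAt (fun y => eval y p)
      (∑ a, eval x (pderiv a p) • ContinuousLinearMap.proj (R := 𝕜) (φ := fun _ => 𝕜) a) x := by
  classical
  induction p using MvPolynomial.induction_on with
  | C c =>
    simp only [eval_C]
    refine (hasFDerivAt_const (𝕜 := 𝕜) c x).congr_fderiv ?_
    ext v
    simp
  | add p q hp hq =>
    simp only [eval_add]
    refine (hp.add hq).congr_fderiv ?_
    ext v
    simp [add_mul, sum_add_distrib]
  | mul_X p k hp =>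
    simp only [eval_mul, eval_X]
    refine (hp.mul (hasFDerivAt_apply k x)).congr_fderiv ?_
    ext v
    simp [Derivation.leibniz, pderiv_X, Pi.single_apply, mul_sum, add_mul, sum_add_distrib,
      apply_ite (eval x), ite_mul, mul_assoc]

theorem fderiv_eval_apply_single [DecidableEq σ] (p : MvPolynomial σ 𝕜) (x : σ → 𝕜) (i : σ) :
    fderiv 𝕜 (fun y => eval y p) x (Pi.single i 1) = eval x (pderiv i p) := by
  simp [(hasFDerivAt_eval p x).fderiv, Pi.single_apply]

end MvPolynomial

section PolynomialFunctions

variable {N : ℕ} {m : ℝ} {g : (Fin N → ℝ) → ℝ} {p : MvPolynomial (Fin N) ℝ}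

theorem eqOn_polychronakosOp (i : Fin N)
    (hg : Set.EqOn g (fun y => eval y p) {y | Function.Injective y}) :
    Set.EqOn (polychronakosOp N m i g) (fun y => eval y (polychronakos m i p))
      {y | Function.Injective y} := by
  intro x hx
  have hloc : g =ᶠ[nhds x] fun y => eval y p :=
    Filter.eventuallyEq_of_mem (isOpen_setOf_injective.mem_nhds hx) hg
  have hdiff : ∀ j ∈ univ.erase i,
      (g (x ∘ swap i j) - g x) / (x i - x j) = eval x (divDiff i j p) := by
    intro j hj
    rw [hg (hx.comp (swap i j).injective), hg hx,
      div_eq_iff (sub_ne_zero.2 (hx.ne (mem_erase.1 hj).1.symm))]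
    simpa [eval_rename, mul_comm] using (congrArg (eval x) (X_sub_X_mul_divDiff i j p)).symm
  simp only [polychronakosOp, dunklOp, hloc.fderiv_eq, fderiv_eval_apply_single,
    sum_congr rfl hdiff]
  simp [polychronakos, dunkl, map_sum]

theorem eqOn_iterate_polychronakosOp (i : Fin N) (k : ℕ)
    (hg : Set.EqOn g (fun y => eval y p) {y | Function.Injective y}) :
    Set.EqOn ((polychronakosOp N m i)^[k] g) (fun y => eval y ((polychronakos m i ^ k) p))
      {y | Function.Injective y} := by
  induction k with
  | zero => simpa using hg
  | succ k ih =>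
    rw [Function.iterate_succ_apply', pow_succ', Module.End.mul_apply]
    exact eqOn_polychronakosOp i ih

theorem eqOn_sigmaOp (k : ℕ) (hg : Set.EqOn g (fun y => eval y p) {y | Function.Injective y}) :
    Set.EqOn (sigmaOp N m k g) (fun y => eval y ((∑ i, polychronakos m i ^ k) p))
      {y | Function.Injective y} := fun x hx => by
  simp only [sigmaOp, LinearMap.sum_apply, map_sum]
  exact sum_congr rfl fun i _ => eqOn_iterate_polychronakosOp i k hg hx

end PolynomialFunctions

/-- the power sums `σ_k = ∑ π_i^k` of Polychronakos' operators pairwise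
commute, `[σ_k, σ_l] = 0`, as operators on polynomials (stated pointwise away from the
diagonals `x_a = x_b`, where all the operators involved are defined). -/
theorem sigmaOp_commute (N : ℕ) (m : ℝ) (k l : ℕ)
    (p : MvPolynomial (Fin N) ℝ) (f : (Fin N → ℝ) → ℝ) (hf : f = fun x => eval x p)
    (x : Fin N → ℝ) (hx : ∀ a b : Fin N, a ≠ b → x a ≠ x b) :
    sigmaOp N m k (sigmaOp N m l f) x = sigmaOp N m l (sigmaOp N m k f) x := by
  have hinj : Function.Injective x := fun a b hab => by_contra fun h => hx a b h hab
  have hf' : Set.EqOn f (fun y => eval y p) {y | Function.Injective y} := fun y _ => by rw [hf]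
  rw [eqOn_sigmaOp k (eqOn_sigmaOp l hf') hinj, eqOn_sigmaOp l (eqOn_sigmaOp k hf') hinj]
  exact congrArg (eval x) (LinearMap.congr_fun (commute_sum_polychronakos_pow m k l).eq p)
end

section
/- For m = 1, the m-Hermite polynomials satisfy the recurrence x² H_k^{(1)}(x) = ((k-1)/(k+1)) H_{k+2}^{(1)}(x) + (2k-1) H_k^{(1)}(x) + k(k-1) H_{k-2}^{(1)}(x) for all k ≥ 2. -/
open Polynomial

/-- The `m = 1` Hermite polynomial `H_n^{(1)} = W[x, H_n] = x H_n' - H_n`, where `H_n` is the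
probabilist's Hermite polynomial. -/
noncomputable def mHermiteOne (n : ℕ) : Polynomial ℝ :=
  X * derivative ((hermite n).map (Int.castRingHom ℝ))
    - (hermite n).map (Int.castRingHom ℝ)

/-!
From `H_{n+1} = x H_n - H_n'` one gets `H_n^{(1)} = (x² - 1) H_n - x H_{n+1}`, and the three-term
recurrence `H_{n+2} = x H_{n+1} - (n + 1) H_n` then writes every `H_{m+j}^{(1)}` in terms of `H_m` and
`H_{m+1}`. With `k = m + 2` and the denominator `k + 1` cleared, the recurrence is an identity between integer
polynomials in `x`, `m`, `H_m` and `H_{m+1}`.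
-/

namespace Polynomial

theorem derivative_hermite_succ (n : ℕ) :
    derivative (hermite (n + 1)) = (n + 1 : ℤ[X]) * hermite n := by
  induction n with
  | zero => simp [hermite_zero]
  | succ n ih =>
    rw [hermite_succ (n + 1), derivative_sub, derivative_mul, derivative_X, ih,
      derivative_mul, hermite_succ n]
    simp only [derivative_add, derivative_natCast, derivative_one]
    push_cast
    ring

theorem hermite_add_two (n : ℕ) :
    hermite (n + 2) = X * hermite (n + 1) - (n + 1 : ℤ[X]) * hermite n := by
  rw [hermite_succ (n + 1), derivative_hermite_succ]

noncomputable def hermiteWronskian (n : ℕ) : ℤ[X] :=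
  X * derivative (hermite n) - hermite n

theorem hermiteWronskian_eq (n : ℕ) :
    hermiteWronskian n = (X ^ 2 - 1) * hermite n - X * hermite (n + 1) := by
  rw [hermiteWronskian, hermite_succ]
  ring

theorem hermiteWronskian_recurrence (m : ℕ) :
    (m + 3 : ℤ[X]) * X ^ 2 * hermiteWronskian (m + 2)
      = (m + 1 : ℤ[X]) * hermiteWronskian (m + 4)
        + (m + 3 : ℤ[X]) * (2 * m + 3 : ℤ[X]) * hermiteWronskian (m + 2)
        + (m + 3 : ℤ[X]) * (m + 2 : ℤ[X]) * (m + 1 : ℤ[X]) * hermiteWronskian m := by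
  simp only [hermiteWronskian_eq, hermite_add_two]
  push_cast
  ring

theorem map_hermiteWronskian (n : ℕ) :
    (hermiteWronskian n).map (Int.castRingHom ℝ) = mHermiteOne n := by
  simp [hermiteWronskian, mHermiteOne, derivative_map]

end Polynomial

/-- the recurrence
`x² H_k^{(1)} = ((k-1)/(k+1)) H_{k+2}^{(1)} + (2k-1) H_k^{(1)} + k(k-1) H_{k-2}^{(1)}`
for all `k ≥ 2`. -/
theorem mHermiteOne_quadratic_recurrence (k : ℕ) (hk : 2 ≤ k) :
    X ^ 2 * mHermiteOne k
      = C (((k : ℝ) - 1) / ((k : ℝ) + 1)) * mHermiteOne (k + 2)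
        + C (2 * (k : ℝ) - 1) * mHermiteOne k
        + C ((k : ℝ) * ((k : ℝ) - 1)) * mHermiteOne (k - 2) := by
  obtain ⟨m, rfl⟩ := Nat.exists_eq_add_of_le' hk
  have hcleared := congrArg (map (Int.castRingHom ℝ)) (hermiteWronskian_recurrence m)
  simp only [Polynomial.map_add, Polynomial.map_mul, Polynomial.map_pow, Polynomial.map_natCast,
    Polynomial.map_ofNat, Polynomial.map_one, Polynomial.map_X, map_hermiteWronskian] at hcleared
  have hm : (m : ℝ) + 3 ≠ 0 := by positivity
  have hcancel : ((m : ℝ) + 3) * (((m : ℝ) + 2 - 1) / ((m : ℝ) + 2 + 1)) = m + 1 := by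
    field_simp
    ring
  replace hcancel := congrArg C hcancel
  apply mul_left_cancel₀ (C_ne_zero.mpr hm)
  push_cast
  simp only [map_add, map_mul, map_sub, map_natCast, map_ofNat, map_one] at hcancel ⊢
  linear_combination hcleared - mHermiteOne (m + 4) * hcancel
end
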